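/- Let G = ⟨σ₁, σ₂⟩ ≅ C₂ × C₂ act over k of characteristic 2 on k[x₁,x₂,x₃,x₄] by permuting variables, with σ₁ acting as (12)(34) and σ₂ as (13)(24). Let I = Tr^G(k[x₁,x₂,x₃,x₄]) be the transfer ideal of the invariant ring. Then the orbit sum o(m) of a monomial m lies in I if and only if the G-orbit of m has exactly 4 elements (equivalently, the stabilizer of m in G is trivial). -/
import Mathlib


open MvPolynomial

/-- The Klein four group `C₂ × C₂`. -/
abbrev K4 := Multiplicative (ZMod 2 × ZMod 2)

/-- The first generator `σ₁` of the Klein four group. -/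
def s1 : K4 := Multiplicative.ofAdd (1, 0)

/-- The second generator `σ₂` of the Klein four group. -/
def s2 : K4 := Multiplicative.ofAdd (0, 1)

/-- The permutation `(12)(34)` of the four variables. -/
def e1 : Equiv.Perm (Fin 4) := Equiv.swap 0 1 * Equiv.swap 2 3

/-- The permutation `(13)(24)` of the four variables. -/
def e2 : Equiv.Perm (Fin 4) := Equiv.swap 0 2 * Equiv.swap 1 3

/-- The permutation action of the Klein four group on the four variables,
with `σ₁ ↦ (12)(34)` and `σ₂ ↦ (13)(24)`. -/
def permOf (g : K4) : Equiv.Perm (Fin 4) :=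
  e1 ^ (Multiplicative.toAdd g).1.val * e2 ^ (Multiplicative.toAdd g).2.val

/-- The ring of `H`-invariants in `R`. -/
def invSub (G R : Type) [Group G] [CommRing R] [MulSemiringAction G R]
    (H : Subgroup G) : Subring R where
  carrier := {f : R | ∀ h : H, (h : G) • f = f}
  mul_mem' := fun ha hb h => by rw [smul_mul', ha h, hb h]
  one_mem' := fun h => smul_one _
  add_mem' := fun ha hb h => by rw [smul_add, ha h, hb h]
  zero_mem' := fun h => smul_zero _
  neg_mem' := fun ha h => by rw [smul_neg, (ha h : _)]

/-- The transfer ideal `I = Tr^G(k[V])·k[V]^G`, where `Tr^G(f) = Σ_{g∈G} g·f`. -/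
noncomputable def transferIdealTriv (G R : Type) [Group G] [Fintype G] [CommRing R]
    [MulSemiringAction G R] : Ideal (invSub G R ⊤) :=
  Ideal.span {y | ∃ f : R, (y : R) = ∑ g : G, g • f}

lemma aux_permOf_mul : ∀ g h : K4, permOf (g * h) = permOf g * permOf h := by decide

lemma aux_permOf_one : permOf 1 = 1 := by decide

lemma aux_sq : ∀ g : K4, g * g = 1 := by decide

lemma aux_mem_invSub {G R : Type} [Group G] [CommRing R] [MulSemiringAction G R]
    {H : Subgroup G} {x : R} : x ∈ invSub G R H ↔ ∀ h : H, (h : G) • x = x := Iff.rfl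

/-- for the Klein four group permuting the variables of
`k[x₁,x₂,x₃,x₄]` (characteristic 2) via `(12)(34)` and `(13)(24)`, the orbit sum
`o(m)` of a monomial `m` lies in the transfer ideal `I = Tr^G(k[V])` of the
invariant ring if and only if the `G`-orbit of `m` has exactly 4 elements. -/
theorem klein_regular_orbit_sum_in_transfer_ideal_iff
    (k : Type) [Field k] [CharP k 2]
    [MulSemiringAction K4 (MvPolynomial (Fin 4) k)]
    [SMulCommClass K4 k (MvPolynomial (Fin 4) k)]
    (hact : ∀ (g : K4) (f : MvPolynomial (Fin 4) k), g • f = rename (permOf g) f) :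
    ∀ d : Fin 4 →₀ ℕ,
      ((∃ y : invSub K4 (MvPolynomial (Fin 4) k) ⊤,
          (y : MvPolynomial (Fin 4) k) =
            ∑ e ∈ Finset.image (fun g : K4 => Finsupp.mapDomain (permOf g) d) Finset.univ,
              monomial e (1 : k) ∧
          y ∈ transferIdealTriv K4 (MvPolynomial (Fin 4) k)) ↔
        (Finset.image (fun g : K4 => Finsupp.mapDomain (permOf g) d) Finset.univ).card = 4) := by
  intro d
  set ψ : K4 → (Fin 4 →₀ ℕ) := fun g => Finsupp.mapDomain (permOf g) d with hψ
  have hψmul : ∀ g h : K4, ψ (g * h) = Finsupp.mapDomain (permOf g) (ψ h) := by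
    intro g h
    simp only [hψ, aux_permOf_mul, Equiv.Perm.coe_mul, Finsupp.mapDomain_comp]
  have hψ1 : ψ 1 = d := by
    simp only [hψ, aux_permOf_one, Equiv.Perm.coe_one, Finsupp.mapDomain_id]
  have hmd : ∀ (g : K4) (m : Fin 4 →₀ ℕ),
      Finsupp.mapDomain (permOf g) (Finsupp.mapDomain (permOf g) m) = m := by
    intro g m
    rw [← Finsupp.mapDomain_comp, ← Equiv.Perm.coe_mul, ← aux_permOf_mul, aux_sq,
      aux_permOf_one, Equiv.Perm.coe_one, Finsupp.mapDomain_id]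
  have hco : ∀ (g : K4) (f : MvPolynomial (Fin 4) k) (m : Fin 4 →₀ ℕ),
      coeff m (rename (permOf g) f) = coeff (Finsupp.mapDomain (permOf g) m) f := by
    intro g f m
    conv_lhs => rw [← hmd g m]
    exact coeff_rename_mapDomain _ (permOf g).injective f _
  have hTrInv : ∀ f : MvPolynomial (Fin 4) k,
      (∑ g : K4, g • f) ∈ invSub K4 (MvPolynomial (Fin 4) k) ⊤ := by
    intro f
    rw [aux_mem_invSub]
    intro h
    rw [Finset.smul_sum]
    exact Fintype.sum_equiv (Equiv.mulLeft (h : K4)) _ _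
      (fun g => by rw [Equiv.coe_mulLeft, mul_smul])
  constructor
  · rintro ⟨y, hy, hyI⟩
    by_contra hcard
    have hninj : ¬ Function.Injective ψ := by
      intro hinj
      exact hcard (by rw [Finset.card_image_of_injective _ hinj]; rfl)
    rw [Function.not_injective_iff] at hninj
    obtain ⟨a, b, hab, hne⟩ := hninj
    set h0 : K4 := a * b with hh0
    have hainv : a⁻¹ = a := inv_eq_of_mul_eq_one_right (aux_sq a)
    have hh0ne : h0 ≠ 1 := by
      intro h
      exact hne (by rw [← hainv]; exact (eq_inv_of_mul_eq_one_left
        (by rw [mul_comm]; exact hh0 ▸ h)).symm)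
    have hψh0 : ψ h0 = d := by
      rw [hh0, hψmul, ← hab, ← hψmul, aux_sq, hψ1]
    have hh0sq : h0 * h0 = 1 := aux_sq h0
    obtain ⟨f, hf⟩ : ∃ f : MvPolynomial (Fin 4) k,
        (y : MvPolynomial (Fin 4) k) = ∑ g : K4, g • f := by
      refine Submodule.span_induction
        (p := fun x _ => ∃ f : MvPolynomial (Fin 4) k,
          ((x : invSub K4 (MvPolynomial (Fin 4) k) ⊤) : MvPolynomial (Fin 4) k)
            = ∑ g : K4, g • f)
        (fun x hx => hx) ⟨0, by simp⟩ ?_ ?_ hyI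
      · rintro x y' _ _ ⟨f, hf⟩ ⟨f', hf'⟩
        refine ⟨f + f', ?_⟩
        push_cast [hf, hf']
        rw [← Finset.sum_add_distrib]
        exact Finset.sum_congr rfl fun g _ => (smul_add _ _ _).symm
      · rintro a x _ ⟨f, hf⟩
        refine ⟨(a : MvPolynomial (Fin 4) k) * f, ?_⟩
        rw [smul_eq_mul]
        push_cast [hf]
        rw [Finset.mul_sum]
        refine Finset.sum_congr rfl fun g _ => ?_
        rw [smul_mul', a.2 ⟨g, Subgroup.mem_top g⟩]
    have hc1 : coeff d (y : MvPolynomial (Fin 4) k) = 1 := by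
      rw [hy, coeff_sum]
      rw [Finset.sum_eq_single_of_mem d
        (Finset.mem_image.2 ⟨1, Finset.mem_univ _, hψ1⟩)
        (fun e _ hne' => by rw [coeff_monomial, if_neg hne'])]
      rw [coeff_monomial, if_pos rfl]
    have hc0 : coeff d (y : MvPolynomial (Fin 4) k) = 0 := by
      rw [hf, coeff_sum]
      have hval : ∀ g : K4, coeff d (g • f) = coeff (ψ g) f := by
        intro g
        rw [hact, hco]
      refine Finset.sum_involution (fun g _ => g * h0) ?_ ?_ (fun _ _ => Finset.mem_univ _) ?_
      · intro g _
        rw [hval, hval, hψmul, hψh0]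
        exact CharTwo.add_self_eq_zero _
      · intro g _ _
        show g * h0 ≠ g
        exact fun h => hh0ne (mul_left_cancel (a := g) (by rw [h, mul_one]))
      · intro g _
        show g * h0 * h0 = g
        rw [mul_assoc, hh0sq, mul_one]
    rw [hc1] at hc0
    exact one_ne_zero hc0
  · intro hcard
    have hinj : Function.Injective ψ := by
      have h4 : (Finset.univ : Finset K4).card = 4 := rfl
      have := Finset.card_image_iff.1 (by rw [hcard, h4])
      intro a b hab
      exact this (Finset.mem_coe.2 (Finset.mem_univ a)) (Finset.mem_coe.2 (Finset.mem_univ b)) hab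
    refine ⟨⟨∑ g : K4, g • (monomial d (1 : k) : MvPolynomial (Fin 4) k), hTrInv _⟩, ?_, ?_⟩
    · show (∑ g : K4, g • (monomial d (1 : k) : MvPolynomial (Fin 4) k)) = _
      rw [Finset.sum_image (fun a _ b _ h => hinj h)]
      refine Finset.sum_congr rfl fun g _ => ?_
      rw [hact, rename_monomial]
    · exact Ideal.subset_span ⟨monomial d (1 : k), rfl⟩
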